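/- arXiv:2405.07137 — 2 statements merged into one kernel-verified Lean document; each statement's English description precedes it below -/
import Mathlib

section
/- Let F : ℝ^{2N} → ℝ be a multilinear function (affine in each coordinate) mapping {±1}^{2N} into [−1,1]. Then for every z ∈ ℝ^{2N}, |F(z)| ≤ ∏_{i=1}^{2N} max(1, |z_i|). -/
open Finset

/-- Multilinear function on `ℝ^m` given by coefficients `Fc : Finset (Fin m) → ℝ`:
`F(z) = ∑_S Fc(S) ∏_{i∈S} z_i`. -/
def mlin {m : ℕ} (Fc : Finset (Fin m) → ℝ) (z : Fin m → ℝ) : ℝ :=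
  ∑ S : Finset (Fin m), Fc S * ∏ i ∈ S, z i

lemma mlin_update {m : ℕ} (Fc : Finset (Fin m) → ℝ) (z : Fin m → ℝ) (a : Fin m) (t : ℝ) :
    mlin Fc (Function.update z a t) =
      ((1 + t) / 2) * mlin Fc (Function.update z a 1) +
        ((1 - t) / 2) * mlin Fc (Function.update z a (-1)) := by
  unfold mlin
  rw [Finset.mul_sum, Finset.mul_sum, ← Finset.sum_add_distrib]
  refine Finset.sum_congr rfl fun S _ => ?_
  by_cases ha : a ∈ S
  · have h1 : ∀ c : ℝ, ∏ i ∈ S, Function.update z a c i = c * ∏ i ∈ S.erase a, z i := by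
      intro c
      rw [← Finset.mul_prod_erase S _ ha, Function.update_self]
      congr 1
      exact Finset.prod_congr rfl fun i hi =>
        Function.update_of_ne (Finset.ne_of_mem_erase hi) _ _
    rw [h1, h1, h1]; ring
  · have h1 : ∀ c : ℝ, ∏ i ∈ S, Function.update z a c i = ∏ i ∈ S, z i := by
      intro c
      exact Finset.prod_congr rfl fun i hi =>
        Function.update_of_ne (by rintro rfl; exact ha hi) _ _
    rw [h1, h1, h1]; ring

lemma keymax (t : ℝ) : (|1 + t| + |1 - t|) / 2 = max 1 |t| := by
  rcases le_total 1 |t| with h | h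
  · rw [max_eq_right h]
    rcases abs_cases t with ⟨h1, h2⟩ | ⟨h1, h2⟩ <;>
      rcases abs_cases (1 + t) with ⟨h3, h4⟩ | ⟨h3, h4⟩ <;>
      rcases abs_cases (1 - t) with ⟨h5, h6⟩ | ⟨h5, h6⟩ <;> linarith
  · rw [max_eq_left h]
    rcases abs_cases t with ⟨h1, h2⟩ | ⟨h1, h2⟩ <;>
      rcases abs_cases (1 + t) with ⟨h3, h4⟩ | ⟨h3, h4⟩ <;>
      rcases abs_cases (1 - t) with ⟨h5, h6⟩ | ⟨h5, h6⟩ <;> linarith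

lemma mlin_aux {m : ℕ} (Fc : Finset (Fin m) → ℝ)
    (hbound : ∀ z : Fin m → ℝ, (∀ i, z i = 1 ∨ z i = -1) → |mlin Fc z| ≤ 1) :
    ∀ T : Finset (Fin m), ∀ z : Fin m → ℝ, (∀ i ∉ T, z i = 1 ∨ z i = -1) →
      |mlin Fc z| ≤ ∏ i ∈ T, max 1 |z i| := by
  intro T
  induction T using Finset.induction_on with
  | empty =>
    intro z hz
    simpa using hbound z (fun i => hz i (Finset.notMem_empty i))
  | @insert a T ha ih =>
    intro z hz
    set t := z a with ht
    have hP : ∀ c : ℝ, ∏ i ∈ T, max 1 |Function.update z a c i| = ∏ i ∈ T, max 1 |z i| :=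
      fun c => Finset.prod_congr rfl fun i hi => by
        rw [Function.update_of_ne (by rintro rfl; exact ha hi)]
    have hup : ∀ c : ℝ, (c = 1 ∨ c = -1) →
        |mlin Fc (Function.update z a c)| ≤ ∏ i ∈ T, max 1 |z i| := by
      intro c hc
      rw [← hP c]
      refine ih _ fun i hi => ?_
      by_cases hia : i = a
      · subst hia; rw [Function.update_self]; exact hc
      · rw [Function.update_of_ne hia]
        exact hz i (by simp [hia, hi])
    have hz' : z = Function.update z a t := by
      funext i
      by_cases hia : i = a
      · subst hia; rw [Function.update_self]
      · rw [Function.update_of_ne hia]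
    have key := mlin_update Fc z a t
    rw [← hz'] at key
    have h1 := hup 1 (Or.inl rfl)
    have h2 := hup (-1) (Or.inr rfl)
    have hQ : (0:ℝ) ≤ ∏ i ∈ T, max 1 |z i| :=
      Finset.prod_nonneg fun i _ => le_trans zero_le_one (le_max_left _ _)
    calc |mlin Fc z| ≤ |(1 + t) / 2| * |mlin Fc (Function.update z a 1)| +
          |(1 - t) / 2| * |mlin Fc (Function.update z a (-1))| := by
          rw [key]
          exact le_trans (abs_add_le _ _) (by rw [abs_mul, abs_mul])
      _ ≤ |(1 + t) / 2| * (∏ i ∈ T, max 1 |z i|) + |(1 - t) / 2| * (∏ i ∈ T, max 1 |z i|) := by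
          gcongr
      _ = (|1 + t| + |1 - t|) / 2 * ∏ i ∈ T, max 1 |z i| := by
          rw [abs_div, abs_div]
          simp
          ring
      _ = max 1 |t| * ∏ i ∈ T, max 1 |z i| := by rw [keymax]
      _ = ∏ i ∈ insert a T, max 1 |z i| := by rw [Finset.prod_insert ha]

/-- a multilinear `F : ℝ^{2N} → ℝ` mapping `{±1}^{2N}` into
`[−1,1]` satisfies `|F(z)| ≤ ∏ᵢ max(1, |zᵢ|)` for every `z ∈ ℝ^{2N}`. -/
theorem stmt_12 (N : ℕ) (Fc : Finset (Fin (2 * N)) → ℝ)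
    (hbound : ∀ z : Fin (2 * N) → ℝ, (∀ i, z i = 1 ∨ z i = -1) → |mlin Fc z| ≤ 1) :
    ∀ z : Fin (2 * N) → ℝ, |mlin Fc z| ≤ ∏ i : Fin (2 * N), max 1 |z i| := by
  intro z
  exact mlin_aux Fc hbound Finset.univ z (fun i hi => absurd (Finset.mem_univ i) hi)
end

section
/- Let Σ be PSD with λ_max(Σ) ≤ p(n) for some polynomial p, and let Σ̃ = H_N Σ H_N where H_N is the normalized Hadamard matrix (N = 2^n). Then for any constant λ₀ ∈ (0, 1/2], the quantity (2/N) ∑_{e∈{0,1}^n} λ₀^{|e|}(1−λ₀)^{n−|e|} ∑_{i∈{0,1}^n} Σ̃_{i,i⊕e}² is at most 2(1−λ₀)^n · p(n)², hence exponentially small in n. -/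
open Matrix Finset

/-- Mod-2 inner product exponent on `{0,1}ⁿ`. -/
def dotB {n : ℕ} (x y : Fin n → Bool) : ℕ := ∑ i : Fin n, if x i ∧ y i then 1 else 0

/-- The normalized `2ⁿ × 2ⁿ` Hadamard matrix indexed by `{0,1}ⁿ`. -/
noncomputable def hadMat (n : ℕ) : Matrix (Fin n → Bool) (Fin n → Bool) ℝ :=
  fun i j => (-1 : ℝ) ^ dotB i j / Real.sqrt ((2 : ℝ) ^ n)

/-- Hamming weight of `e ∈ {0,1}ⁿ`. -/
def hamWt {n : ℕ} (e : Fin n → Bool) : ℕ := (Finset.univ.filter fun k => e k = true).card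

lemma dotB_comm {n : ℕ} (x y : Fin n → Bool) : dotB x y = dotB y x := by
  unfold dotB; apply Finset.sum_congr rfl; intro i _; simp [and_comm]

lemma sign_sum_zero {n : ℕ} (i j : Fin n → Bool) (h : i ≠ j) :
    ∑ k : Fin n → Bool, (-1:ℝ) ^ (dotB i k + dotB k j) = 0 := by
  obtain ⟨m, hm⟩ : ∃ m, i m ≠ j m := by
    by_contra hc; push_neg at hc; exact h (funext hc)
  apply Finset.sum_ninvolution (fun k => Function.update k m (!(k m)))
  · intro k
    have key : ∀ b : Bool, (-1:ℝ) ^ (dotB i (Function.update k m b) + dotB (Function.update k m b) j)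
        = (-1:ℝ) ^ ((if i m ∧ b then 1 else 0) + (if b ∧ j m then 1 else 0)) *
          (-1:ℝ) ^ (∑ l ∈ univ.erase m, ((if i l ∧ k l then 1 else 0) + (if k l ∧ j l then 1 else 0))) := by
      intro b
      rw [← pow_add]
      congr 1
      unfold dotB
      rw [← Finset.sum_add_distrib, ← Finset.add_sum_erase _ _ (Finset.mem_univ m)]
      congr 1
      · simp
      · apply Finset.sum_congr rfl
        intro l hl
        rw [Function.update_of_ne (Finset.ne_of_mem_erase hl)]
    have h1 := key (k m)
    have h2 := key (!(k m))
    rw [Function.update_eq_self] at h1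
    rw [h1, h2]
    have hsign : ((-1:ℝ) ^ ((if i m ∧ !(k m) then 1 else 0) + (if !(k m) ∧ j m then 1 else 0)))
        = -((-1:ℝ) ^ ((if i m ∧ k m then 1 else 0) + (if k m ∧ j m then 1 else 0))) := by
      rcases Bool.eq_false_or_eq_true (i m) with hi | hi <;>
        rcases Bool.eq_false_or_eq_true (j m) with hj | hj <;>
          simp [hi, hj] at hm ⊢ <;>
          rcases Bool.eq_false_or_eq_true (k m) with hk | hk <;> simp [hk]
    rw [hsign]; ring
  · intro k _
    intro hc
    have := congrFun hc m
    simp at this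
  · intro k; exact Finset.mem_univ _
  · intro k; simp

lemma hadMat_mul_self (n : ℕ) : hadMat n * hadMat n = 1 := by
  ext i j
  simp only [Matrix.mul_apply, hadMat]
  have h2 : (0:ℝ) < (2:ℝ)^n := by positivity
  have hs : Real.sqrt ((2:ℝ)^n) * Real.sqrt ((2:ℝ)^n) = (2:ℝ)^n := Real.mul_self_sqrt h2.le
  have hsum : ∀ k : Fin n → Bool, (-1:ℝ) ^ dotB i k / Real.sqrt ((2:ℝ)^n) * ((-1:ℝ) ^ dotB k j / Real.sqrt ((2:ℝ)^n))
      = (-1:ℝ) ^ (dotB i k + dotB k j) / (2:ℝ)^n := by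
    intro k; rw [div_mul_div_comm, hs, pow_add]
  rw [Finset.sum_congr rfl fun k _ => hsum k, ← Finset.sum_div]
  by_cases hij : i = j
  · subst hij
    have : ∀ k : Fin n → Bool, (-1:ℝ) ^ (dotB i k + dotB k i) = 1 := by
      intro k
      rw [dotB_comm k i, ← two_mul, pow_mul]
      norm_num
    rw [Finset.sum_congr rfl fun k _ => this k]
    simp [Matrix.one_apply, Fintype.card_fun]
  · rw [sign_sum_zero i j hij]
    simp [Matrix.one_apply, hij]

lemma hadMat_transpose (n : ℕ) : (hadMat n)ᵀ = hadMat n := by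
  ext i j
  simp [hadMat, Matrix.transpose_apply, dotB_comm j i]

lemma trace_sq_eq {n : ℕ} (S : Matrix (Fin n → Bool) (Fin n → Bool) ℝ) (hpsd : S.PosSemidef) :
    Matrix.trace (S * S) = ∑ k, (hpsd.1.eigenvalues k)^2 := by
  have hA := hpsd.1
  have hspec := hA.spectral_theorem
  set U : Matrix (Fin n → Bool) (Fin n → Bool) ℝ :=
    ((hA.eigenvectorUnitary : Matrix.unitaryGroup (Fin n → Bool) ℝ) : Matrix (Fin n → Bool) (Fin n → Bool) ℝ) with hU
  set D : Matrix (Fin n → Bool) (Fin n → Bool) ℝ := diagonal (RCLike.ofReal ∘ hA.eigenvalues) with hD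
  have hU1 : star U * U = 1 := Unitary.coe_star_mul_self hA.eigenvectorUnitary
  have : S * S = U * (D * D) * star U := by
    rw [hspec]
    calc U * D * star U * (U * D * star U) = U * D * (star U * U) * D * star U := by
          simp only [Matrix.mul_assoc]
        _ = U * (D * D) * star U := by rw [hU1]; simp only [Matrix.mul_one, Matrix.mul_assoc]
  rw [this, Matrix.trace_mul_cycle, ← Matrix.mul_assoc, hU1, Matrix.one_mul, hD,
    Matrix.diagonal_mul_diagonal, Matrix.trace_diagonal]
  simp [sq]

/-- if `Σ` is PSD with all eigenvalues at most `p`, and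
`Σ̃ = H_N Σ H_N`, then for any `λ₀ ∈ (0, 1/2]`,
`(2/N) ∑_e λ₀^{|e|}(1−λ₀)^{n−|e|} ∑_i Σ̃_{i,i⊕e}² ≤ 2(1−λ₀)ⁿ·p²`. -/
theorem stmt_17 (n : ℕ) (S : Matrix (Fin n → Bool) (Fin n → Bool) ℝ)
    (hpsd : S.PosSemidef) (p : ℝ) (hp : 0 ≤ p)
    (hmax : ∀ k, hpsd.1.eigenvalues k ≤ p)
    (lam0 : ℝ) (hlam0 : 0 < lam0) (hlam0' : lam0 ≤ 1 / 2) :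
    (2 / (2 : ℝ) ^ n) * ∑ e : Fin n → Bool,
        lam0 ^ hamWt e * (1 - lam0) ^ (n - hamWt e) *
          ∑ i : Fin n → Bool,
            ((hadMat n * S * hadMat n) i (fun k => xor (i k) (e k))) ^ 2 ≤
      2 * (1 - lam0) ^ n * p ^ 2 := by
  obtain ⟨T, hT⟩ : ∃ T : Matrix (Fin n → Bool) (Fin n → Bool) ℝ,
      T = hadMat n * S * hadMat n := ⟨_, rfl⟩
  rw [← hT]
  have hlam1 : (0:ℝ) ≤ 1 - lam0 := by linarith
  have hlam2 : lam0 ≤ 1 - lam0 := by linarith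
  -- T is symmetric
  have hSsym : Sᵀ = S := hpsd.1
  have hTsym : Tᵀ = T := by
    rw [hT, Matrix.transpose_mul, Matrix.transpose_mul, hadMat_transpose, hSsym,
      Matrix.mul_assoc]
  -- Frobenius norm of T equals trace(S*S)
  have hfrob : ∑ i : Fin n → Bool, ∑ j : Fin n → Bool, (T i j)^2 = Matrix.trace (S * S) := by
    have hTT : T * T = hadMat n * (S * S) * hadMat n := by
      rw [hT]
      calc hadMat n * S * hadMat n * (hadMat n * S * hadMat n)
          = hadMat n * S * (hadMat n * hadMat n) * S * hadMat n := by
            simp only [Matrix.mul_assoc]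
        _ = hadMat n * (S * S) * hadMat n := by
            rw [hadMat_mul_self]; simp only [Matrix.mul_one, Matrix.mul_assoc]
    have htr : Matrix.trace (T * T) = Matrix.trace (S * S) := by
      rw [hTT, Matrix.trace_mul_cycle, ← Matrix.mul_assoc, hadMat_mul_self, Matrix.one_mul]
    rw [← htr, Matrix.trace, Finset.sum_congr rfl]
    intro i _
    rw [Matrix.diag, Matrix.mul_apply]
    apply Finset.sum_congr rfl
    intro j _
    have h' := congrFun (congrFun hTsym j) i
    rw [Matrix.transpose_apply] at h'
    rw [← h', sq]
  -- trace bound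
  have htrb : Matrix.trace (S * S) ≤ (2:ℝ)^n * p^2 := by
    rw [trace_sq_eq S hpsd]
    have : ∀ k : Fin n → Bool, (hpsd.1.eigenvalues k)^2 ≤ p^2 := by
      intro k
      have h0 := hpsd.eigenvalues_nonneg k
      have h1 := hmax k
      nlinarith
    calc ∑ k, (hpsd.1.eigenvalues k)^2 ≤ ∑ _k : Fin n → Bool, p^2 :=
          Finset.sum_le_sum fun k _ => this k
      _ = (2:ℝ)^n * p^2 := by
          rw [Finset.sum_const]
          simp [Fintype.card_fun]
  -- sum over e of inner sums equals Frobenius norm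
  have hbij : ∑ e : Fin n → Bool, ∑ i : Fin n → Bool, (T i (fun k => xor (i k) (e k)))^2
      = ∑ i : Fin n → Bool, ∑ j : Fin n → Bool, (T i j)^2 := by
    rw [Finset.sum_comm]
    apply Finset.sum_congr rfl
    intro i _
    exact Fintype.sum_bijective (fun e => fun k => xor (i k) (e k))
      (Function.Involutive.bijective (fun e => by funext k; simp)) _ _ (fun e => rfl)
  -- weight bound
  have hw : ∀ e : Fin n → Bool, lam0 ^ hamWt e * (1 - lam0) ^ (n - hamWt e) ≤ (1 - lam0)^n := by
    intro e
    have hk : hamWt e ≤ n := by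
      calc hamWt e ≤ Fintype.card (Fin n) := by
            unfold hamWt; exact (Finset.card_filter_le _ _).trans (by simp)
        _ = n := Fintype.card_fin n
    calc lam0 ^ hamWt e * (1 - lam0) ^ (n - hamWt e)
        ≤ (1 - lam0) ^ hamWt e * (1 - lam0) ^ (n - hamWt e) := by
          apply mul_le_mul_of_nonneg_right (pow_le_pow_left₀ hlam0.le hlam2 _) (pow_nonneg hlam1 _)
      _ = (1 - lam0)^n := by rw [← pow_add, Nat.add_sub_cancel' hk]
  -- combine
  have hmain : ∑ e : Fin n → Bool,
      lam0 ^ hamWt e * (1 - lam0) ^ (n - hamWt e) *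
        ∑ i : Fin n → Bool, (T i (fun k => xor (i k) (e k)))^2
      ≤ (1 - lam0)^n * ((2:ℝ)^n * p^2) := by
    calc ∑ e : Fin n → Bool, lam0 ^ hamWt e * (1 - lam0) ^ (n - hamWt e) *
            ∑ i : Fin n → Bool, (T i (fun k => xor (i k) (e k)))^2
        ≤ ∑ e : Fin n → Bool, (1 - lam0)^n *
            ∑ i : Fin n → Bool, (T i (fun k => xor (i k) (e k)))^2 := by
          apply Finset.sum_le_sum
          intro e _
          apply mul_le_mul_of_nonneg_right (hw e)
          exact Finset.sum_nonneg fun i _ => sq_nonneg _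
      _ = (1 - lam0)^n * ∑ e : Fin n → Bool,
            ∑ i : Fin n → Bool, (T i (fun k => xor (i k) (e k)))^2 := by
          rw [Finset.mul_sum]
      _ = (1 - lam0)^n * Matrix.trace (S * S) := by rw [hbij, hfrob]
      _ ≤ (1 - lam0)^n * ((2:ℝ)^n * p^2) := by
          apply mul_le_mul_of_nonneg_left htrb (pow_nonneg hlam1 _)
  have h2n : (0:ℝ) < (2:ℝ)^n := by positivity
  calc (2 / (2 : ℝ) ^ n) * ∑ e : Fin n → Bool,
        lam0 ^ hamWt e * (1 - lam0) ^ (n - hamWt e) *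
          ∑ i : Fin n → Bool, (T i (fun k => xor (i k) (e k)))^2
      ≤ (2 / (2 : ℝ) ^ n) * ((1 - lam0)^n * ((2:ℝ)^n * p^2)) := by
        apply mul_le_mul_of_nonneg_left hmain (by positivity)
    _ = 2 * (1 - lam0) ^ n * p ^ 2 := by
        field_simp
end
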